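/- arXiv:2503.20285 — 2 statements merged into one kernel-verified Lean document; each statement's English description precedes it below -/
import Mathlib

section
/- Let Q₁, Q₂ : S × A → ℝ be bounded, with S, A finite nonempty. Define (T^π Q)(s,a) = r(s,a) + γ · E_{C}[ min_{s'∈C} E_{a'∼π(s')} Q(s',a') ], where γ ∈ [0,1), C ranges over finite nonempty subsets of S drawn from some distribution, and π(s') is a probability distribution over A. Then ‖T^π Q₁ − T^π Q₂‖_∞ ≤ γ ‖Q₁ − Q₂‖_∞. -/
/-! Averaging against probability weights and taking a minimum over a finite set are both
nonexpansive for the sup norm, so the only contraction in `T^π` comes from the factor `γ`. -/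

open Finset

theorem Finset.abs_inf'_sub_inf'_le {β G : Type*} [AddCommGroup G] [LinearOrder G]
    [IsOrderedAddMonoid G] {s : Finset β} (hs : s.Nonempty) {f g : β → G} {M : G}
    (h : ∀ x ∈ s, |f x - g x| ≤ M) :
    |s.inf' hs f - s.inf' hs g| ≤ M := by
  obtain ⟨x, hx, hfx⟩ := s.exists_mem_eq_inf' hs f
  obtain ⟨y, hy, hgy⟩ := s.exists_mem_eq_inf' hs g
  rw [abs_sub_le_iff]
  constructor
  · calc s.inf' hs f - s.inf' hs g ≤ f y - g y := by rw [hgy]; exact sub_le_sub_right (inf'_le f hy) _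
      _ ≤ M := (abs_sub_le_iff.mp (h y hy)).1
  · calc s.inf' hs g - s.inf' hs f ≤ g x - f x := by rw [hfx]; exact sub_le_sub_right (inf'_le g hx) _
      _ ≤ M := (abs_sub_le_iff.mp (h x hx)).2

theorem Finset.abs_sum_mul_sub_sum_mul_le {ι R : Type*} [CommRing R] [LinearOrder R]
    [IsStrictOrderedRing R] {s : Finset ι} {w f g : ι → R} {M : R}
    (hw0 : ∀ i ∈ s, 0 ≤ w i) (hw1 : ∑ i ∈ s, w i = 1) (h : ∀ i ∈ s, |f i - g i| ≤ M) :
    |∑ i ∈ s, w i * f i - ∑ i ∈ s, w i * g i| ≤ M := by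
  rw [← sum_sub_distrib]
  calc |∑ i ∈ s, (w i * f i - w i * g i)|
      ≤ ∑ i ∈ s, |w i * f i - w i * g i| := abs_sum_le_sum_abs _ _
    _ = ∑ i ∈ s, w i * |f i - g i| :=
        sum_congr rfl fun i hi => by rw [← mul_sub, abs_mul, abs_of_nonneg (hw0 i hi)]
    _ ≤ ∑ i ∈ s, w i * M := sum_le_sum fun i hi => mul_le_mul_of_nonneg_left (h i hi) (hw0 i hi)
    _ = M := by rw [← sum_mul, hw1, one_mul]

theorem stmt1_general {S A ι : Type*} [Fintype S] [Fintype A] [Fintype ι]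
    [Nonempty S] [Nonempty A]
    (r : S × A → ℝ) (γ : ℝ) (hγ0 : 0 ≤ γ)
    (π : S → A → ℝ) (hπ0 : ∀ s a, 0 ≤ π s a) (hπ1 : ∀ s, ∑ a, π s a = 1)
    (w : S × A → ι → ℝ) (hw0 : ∀ p i, 0 ≤ w p i) (hw1 : ∀ p, ∑ i, w p i = 1)
    (C : S × A → ι → Finset S) (hC : ∀ p i, (C p i).Nonempty)
    (T : (S × A → ℝ) → (S × A → ℝ))
    (hT : ∀ Q p, T Q p = r p + γ * ∑ i, w p i *
      (C p i).inf' (hC p i) (fun s' => ∑ a', π s' a' * Q (s', a')))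
    (Q₁ Q₂ : S × A → ℝ) :
    univ.sup' univ_nonempty (fun p : S × A => |T Q₁ p - T Q₂ p|) ≤
      γ * univ.sup' univ_nonempty (fun p : S × A => |Q₁ p - Q₂ p|) := by
  set M := univ.sup' univ_nonempty (fun p : S × A => |Q₁ p - Q₂ p|)
  have hQ (q : S × A) : |Q₁ q - Q₂ q| ≤ M := le_sup' (fun q => |Q₁ q - Q₂ q|) (mem_univ q)
  have hV (s' : S) : |∑ a', π s' a' * Q₁ (s', a') - ∑ a', π s' a' * Q₂ (s', a')| ≤ M :=
    abs_sum_mul_sub_sum_mul_le (fun a _ => hπ0 s' a) (hπ1 s') fun a _ => hQ (s', a)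
  refine sup'_le _ _ fun p _ => ?_
  have hmin (i : ι) := (C p i).abs_inf'_sub_inf'_le (hC p i) fun s' _ => hV s'
  rw [hT, hT, add_sub_add_left_eq_sub, ← mul_sub, abs_mul, abs_of_nonneg hγ0]
  exact mul_le_mul_of_nonneg_left
    (abs_sum_mul_sub_sum_mul_le (fun i _ => hw0 p i) (hw1 p) fun i _ => hmin i) hγ0

theorem stmt1 {S A ι : Type*} [Fintype S] [Fintype A] [Fintype ι]
    [Nonempty S] [Nonempty A]
    (r : S × A → ℝ) (γ : ℝ) (hγ0 : 0 ≤ γ) (hγ1 : γ < 1)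
    (π : S → A → ℝ) (hπ0 : ∀ s a, 0 ≤ π s a) (hπ1 : ∀ s, ∑ a, π s a = 1)
    (w : S × A → ι → ℝ) (hw0 : ∀ p i, 0 ≤ w p i) (hw1 : ∀ p, ∑ i, w p i = 1)
    (C : S × A → ι → Finset S) (hC : ∀ p i, (C p i).Nonempty)
    (T : (S × A → ℝ) → (S × A → ℝ))
    (hT : ∀ Q p, T Q p = r p + γ * ∑ i, w p i *
      (C p i).inf' (hC p i) (fun s' => ∑ a', π s' a' * Q (s', a')))
    (Q₁ Q₂ : S × A → ℝ) :
    univ.sup' univ_nonempty (fun p : S × A => |T Q₁ p - T Q₂ p|) ≤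
      γ * univ.sup' univ_nonempty (fun p : S × A => |Q₁ p - Q₂ p|) :=
  stmt1_general r γ hγ0 π hπ0 hπ1 w hw0 hw1 C hC T hT Q₁ Q₂
end

section
/- Let Q^π_k denote the fixed point of the Bellman operator using the k-th order statistic min_k over a fixed candidate set C of size N'. Then Q^π_k is pointwise monotone nondecreasing in k: for k ≤ k', Q^π_k(s,a) ≤ Q^π_{k'}(s,a) for all (s,a). -/
/-- The `k`-th order statistic (`k`-th smallest value) of the tuple `a`. -/
noncomputable def orderStat {n : ℕ} (a : Fin n → ℝ) (k : Fin n) : ℝ :=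
  a (Tuple.sort a k)

/-!
Both `Qk` and `Qk'` are fixed points of Bellman operators `T_k`, `T_k'` built from order
statistics. If `Qk ≤ Qk' + c` pointwise, then `T_k Qk ≤ T_k' Qk' + γ c`: the order statistic is
monotone in its index and in the tuple and commutes with adding a constant, and expectations
under `π` preserve `≤ · + c`. Taking `c` to be the largest gap `max (Qk - Qk')`, attained on the
finite state-action space, gives `c ≤ γ c`, hence `c ≤ 0` since `γ < 1`.
-/

open Finset

section OrderStat

variable {n : ℕ}

theorem orderStat_le_iff {a : Fin n → ℝ} {k : Fin n} {x : ℝ} :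
    orderStat a k ≤ x ↔ k < #{j | a j ≤ x} := by
  rw [← card_equiv (Tuple.sort a) (s := {i | a (Tuple.sort a i) ≤ x}) (by simp)]
  exact (Tuple.lt_card_le_iff_apply_le_of_monotone (Tuple.monotone_sort a)).symm

theorem orderStat_mono_right (a : Fin n → ℝ) : Monotone (orderStat a) :=
  Tuple.monotone_sort a

theorem orderStat_mono_left {a b : Fin n → ℝ} (hab : a ≤ b) (k : Fin n) :
    orderStat a k ≤ orderStat b k := by
  have hb : k < #{j | b j ≤ orderStat b k} := orderStat_le_iff.mp le_rfl
  refine orderStat_le_iff.mpr (hb.trans_le (card_le_card fun j => ?_))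
  simp only [mem_filter, mem_univ, true_and]
  exact (hab j).trans

theorem orderStat_add_const (a : Fin n → ℝ) (c : ℝ) (k : Fin n) :
    orderStat (fun j => a j + c) k = orderStat a k + c := by
  have hsorted : Monotone ((fun j => a j + c) ∘ Tuple.sort a) :=
    fun i j hij => add_le_add_left (Tuple.monotone_sort a hij) c
  exact (congrFun (Tuple.comp_sort_eq_comp_iff_monotone.mpr hsorted) k).symm

theorem orderStat_le_orderStat_add {a b : Fin n → ℝ} {c : ℝ} (h : ∀ j, a j ≤ b j + c)
    {k l : Fin n} (hkl : k ≤ l) : orderStat a k ≤ orderStat b l + c :=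
  calc orderStat a k ≤ orderStat (fun j => b j + c) k := orderStat_mono_left h k
    _ = orderStat b k + c := orderStat_add_const b c k
    _ ≤ orderStat b l + c := add_le_add_left (orderStat_mono_right b hkl) c

end OrderStat

theorem sum_mul_le_sum_mul_add {ι : Type*} [Fintype ι] {w f g : ι → ℝ} {c : ℝ}
    (hw0 : ∀ i, 0 ≤ w i) (hw1 : ∑ i, w i = 1) (h : ∀ i, f i ≤ g i + c) :
    ∑ i, w i * f i ≤ ∑ i, w i * g i + c :=
  calc ∑ i, w i * f i ≤ ∑ i, w i * (g i + c) :=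
        sum_le_sum fun i _ => mul_le_mul_of_nonneg_left (h i) (hw0 i)
    _ = ∑ i, w i * g i + c := by simp only [mul_add, sum_add_distrib, ← sum_mul, hw1, one_mul]

theorem le_of_forall_le_add_imp_le_add_mul {X : Type*} [Finite X] {f g : X → ℝ} {γ : ℝ}
    (hγ : γ < 1) (h : ∀ c, (∀ x, f x ≤ g x + c) → ∀ x, f x ≤ g x + γ * c) : f ≤ g := by
  rcases isEmpty_or_nonempty X with hX | hX
  · exact fun x => isEmptyElim x
  obtain ⟨x₀, hx₀⟩ := Finite.exists_max fun x => f x - g x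
  have hgap : ∀ x, f x ≤ g x + (f x₀ - g x₀) := fun x => by linarith [hx₀ x]
  have hcontract := h _ hgap x₀
  have hnonpos : f x₀ - g x₀ ≤ 0 := by nlinarith
  exact fun x => by linarith [hgap x]

section Bellman

variable {S A : Type*} [Fintype A] {n : ℕ}

noncomputable def orderStatBellman (r : S × A → ℝ) (γ : ℝ) (π : S → A → ℝ)
    (C : S × A → Fin n → S) (k : Fin n) (Q : S × A → ℝ) (p : S × A) : ℝ :=
  r p + γ * orderStat (fun j => ∑ a', π (C p j) a' * Q (C p j, a')) k

theorem orderStatBellman_le_add (r : S × A → ℝ) {γ : ℝ} (hγ0 : 0 ≤ γ) {π : S → A → ℝ}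
    (hπ0 : ∀ s a, 0 ≤ π s a) (hπ1 : ∀ s, ∑ a, π s a = 1) (C : S × A → Fin n → S)
    {k l : Fin n} (hkl : k ≤ l) {Q Q' : S × A → ℝ} {c : ℝ} (hQ : ∀ p, Q p ≤ Q' p + c)
    (p : S × A) :
    orderStatBellman r γ π C k Q p ≤ orderStatBellman r γ π C l Q' p + γ * c := by
  have hexp : ∀ j, ∑ a', π (C p j) a' * Q (C p j, a') ≤
      ∑ a', π (C p j) a' * Q' (C p j, a') + c := fun j =>
    sum_mul_le_sum_mul_add (hπ0 _) (hπ1 _) fun a' => hQ _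
  have hos := orderStat_le_orderStat_add hexp hkl
  unfold orderStatBellman
  linarith [mul_le_mul_of_nonneg_left hos hγ0]

end Bellman

theorem stmt15_general {S A : Type*} [Fintype S] [Fintype A]
    {N' : ℕ} (r : S × A → ℝ) (γ : ℝ) (hγ0 : 0 ≤ γ) (hγ1 : γ < 1)
    (π : S → A → ℝ) (hπ0 : ∀ s a, 0 ≤ π s a) (hπ1 : ∀ s, ∑ a, π s a = 1)
    (C : S × A → Fin N' → S)
    (k k' : Fin N') (hkk' : k ≤ k')
    (Qk Qk' : S × A → ℝ)
    (hQk : ∀ p, Qk p = r p +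
      γ * orderStat (fun j => ∑ a', π (C p j) a' * Qk (C p j, a')) k)
    (hQk' : ∀ p, Qk' p = r p +
      γ * orderStat (fun j => ∑ a', π (C p j) a' * Qk' (C p j, a')) k') :
    ∀ p, Qk p ≤ Qk' p := by
  refine le_of_forall_le_add_imp_le_add_mul hγ1 fun c hc p => ?_
  rw [hQk p, hQk' p]
  exact orderStatBellman_le_add r hγ0 hπ0 hπ1 C hkk' hc p

theorem stmt15 {S A : Type*} [Fintype S] [Fintype A] [Nonempty S] [Nonempty A]
    {N' : ℕ} (r : S × A → ℝ) (γ : ℝ) (hγ0 : 0 ≤ γ) (hγ1 : γ < 1)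
    (π : S → A → ℝ) (hπ0 : ∀ s a, 0 ≤ π s a) (hπ1 : ∀ s, ∑ a, π s a = 1)
    (C : S × A → Fin N' → S)
    (k k' : Fin N') (hkk' : k ≤ k')
    (Qk Qk' : S × A → ℝ)
    (hQk : ∀ p, Qk p = r p +
      γ * orderStat (fun j => ∑ a', π (C p j) a' * Qk (C p j, a')) k)
    (hQk' : ∀ p, Qk' p = r p +
      γ * orderStat (fun j => ∑ a', π (C p j) a' * Qk' (C p j, a')) k') :
    ∀ p, Qk p ≤ Qk' p :=
  stmt15_general r γ hγ0 hγ1 π hπ0 hπ1 C k k' hkk' Qk Qk' hQk hQk'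
end
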